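/- arXiv:1908.09751 — 3 statements merged into one kernel-verified Lean document; each statement's English description precedes it below -/
import Mathlib

section
/- Let Ω ⊆ ℝ² be open and let w₀, w₁, w₂ : Ω → ℝ be functions of class C³ on Ω satisfying ∇²w₂ + 2∂ₓᵧw₁ = 0 on Ω. Define u = ∂ₓw₀ + ∂ₓw₁ + ∂ᵧw₂ and v = ∂ᵧw₀ − ∂ᵧw₁ − ∂ₓw₂. Then the convective terms h₁ = u ∂ₓu + v ∂ᵧu and h₂ = u ∂ₓv + v ∂ᵧv satisfy ∂ᵧh₁ = ∂ₓh₂ on Ω. -/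
/-- Partial derivative along the first coordinate direction. -/
noncomputable def pdx (w : ℝ × ℝ → ℝ) : ℝ × ℝ → ℝ := fun p => fderiv ℝ w p (1, 0)

/-- Partial derivative along the second coordinate direction. -/
noncomputable def pdy (w : ℝ × ℝ → ℝ) : ℝ × ℝ → ℝ := fun p => fderiv ℝ w p (0, 1)

/-- Laplacian ∇²w = ∂ₓₓw + ∂ᵧᵧw. -/
noncomputable def lap (w : ℝ × ℝ → ℝ) : ℝ × ℝ → ℝ := fun p => pdx (pdx w) p + pdy (pdy w) p

/-!
The vector field `(u, v)` is irrotational: `∂ₓv - ∂ᵧu = -(∇²w₂ + 2∂ₓᵧw₁) = 0`, the `w₀`-terms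
cancelling by symmetry of second derivatives. For an irrotational field the convective term is
the gradient of `(u² + v²)/2`, so its curl vanishes, again by symmetry of second derivatives.
-/

open Filter Topology

lemma fderiv_fderiv_apply_const {E F : Type*} [NormedAddCommGroup E] [NormedSpace ℝ E]
    [NormedAddCommGroup F] [NormedSpace ℝ F] {f : E → F} {p : E}
    (hf : DifferentiableAt ℝ (fderiv ℝ f) p) (e v : E) :
    fderiv ℝ (fun q => fderiv ℝ f q v) p e = fderiv ℝ (fderiv ℝ f) p e v := by
  simp [fderiv_clm_apply hf (differentiableAt_const v)]

section PartialDerivatives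

variable {f g : ℝ × ℝ → ℝ} {p : ℝ × ℝ}

lemma pdx_add (hf : DifferentiableAt ℝ f p) (hg : DifferentiableAt ℝ g p) :
    pdx (fun q => f q + g q) p = pdx f p + pdx g p := by
  simp [pdx, fderiv_fun_add hf hg]

lemma pdy_add (hf : DifferentiableAt ℝ f p) (hg : DifferentiableAt ℝ g p) :
    pdy (fun q => f q + g q) p = pdy f p + pdy g p := by
  simp [pdy, fderiv_fun_add hf hg]

lemma pdx_sub (hf : DifferentiableAt ℝ f p) (hg : DifferentiableAt ℝ g p) :
    pdx (fun q => f q - g q) p = pdx f p - pdx g p := by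
  simp [pdx, fderiv_fun_sub hf hg]

lemma pdx_mul (hf : DifferentiableAt ℝ f p) (hg : DifferentiableAt ℝ g p) :
    pdx (fun q => f q * g q) p = f p * pdx g p + pdx f p * g p := by
  simp [pdx, fderiv_fun_mul hf hg, mul_comm]

lemma pdy_mul (hf : DifferentiableAt ℝ f p) (hg : DifferentiableAt ℝ g p) :
    pdy (fun q => f q * g q) p = f p * pdy g p + pdy f p * g p := by
  simp [pdy, fderiv_fun_mul hf hg, mul_comm]

lemma Filter.EventuallyEq.pdx_eq (h : f =ᶠ[𝓝 p] g) : pdx f p = pdx g p := by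
  simp only [pdx, h.fderiv_eq]

lemma Filter.EventuallyEq.pdy_eq (h : f =ᶠ[𝓝 p] g) : pdy f p = pdy g p := by
  simp only [pdy, h.fderiv_eq]

variable {m n : WithTop ℕ∞}

lemma ContDiffAt.contDiffAt_pdx (hf : ContDiffAt ℝ n f p) (hmn : m + 1 ≤ n) :
    ContDiffAt ℝ m (pdx f) p :=
  (hf.fderiv_right hmn).clm_apply contDiffAt_const

lemma ContDiffAt.contDiffAt_pdy (hf : ContDiffAt ℝ n f p) (hmn : m + 1 ≤ n) :
    ContDiffAt ℝ m (pdy f) p :=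
  (hf.fderiv_right hmn).clm_apply contDiffAt_const

lemma ContDiffAt.differentiableAt_pdx (hf : ContDiffAt ℝ 2 f p) :
    DifferentiableAt ℝ (pdx f) p :=
  (hf.contDiffAt_pdx (m := 1) (by norm_num)).differentiableAt one_ne_zero

lemma ContDiffAt.differentiableAt_pdy (hf : ContDiffAt ℝ 2 f p) :
    DifferentiableAt ℝ (pdy f) p :=
  (hf.contDiffAt_pdy (m := 1) (by norm_num)).differentiableAt one_ne_zero

lemma pdx_pdy_comm (hf : ContDiffAt ℝ 2 f p) : pdx (pdy f) p = pdy (pdx f) p := by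
  have hd : DifferentiableAt ℝ (fderiv ℝ f) p :=
    (hf.fderiv_right (m := 1) (by norm_num)).differentiableAt one_ne_zero
  unfold pdx pdy
  rw [fderiv_fderiv_apply_const hd, fderiv_fderiv_apply_const hd]
  exact (hf.isSymmSndFDerivAt (by simp [minSmoothness_of_isRCLikeNormedField])).eq _ _

end PartialDerivatives

lemma pdx_sub_pdy_eq_neg_lap_add {w₀ w₁ w₂ : ℝ × ℝ → ℝ} {p : ℝ × ℝ}
    (hw₀ : ContDiffAt ℝ 2 w₀ p) (hw₁ : ContDiffAt ℝ 2 w₁ p) (hw₂ : ContDiffAt ℝ 2 w₂ p) :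
    pdx (fun q => pdy w₀ q - pdy w₁ q - pdx w₂ q) p
      - pdy (fun q => pdx w₀ q + pdx w₁ q + pdy w₂ q) p
      = -(lap w₂ p + 2 * pdx (pdy w₁) p) := by
  have hx₀ := hw₀.differentiableAt_pdx
  have hy₀ := hw₀.differentiableAt_pdy
  have hx₁ := hw₁.differentiableAt_pdx
  have hy₁ := hw₁.differentiableAt_pdy
  have hx₂ := hw₂.differentiableAt_pdx
  have hy₂ := hw₂.differentiableAt_pdy
  rw [pdx_sub (hy₀.fun_sub hy₁) hx₂, pdx_sub hy₀ hy₁, pdy_add (hx₀.fun_add hx₁) hy₂,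
    pdy_add hx₀ hx₁, pdx_pdy_comm hw₀, pdx_pdy_comm hw₁, lap]
  ring

theorem pdy_convective_eq_pdx_convective_of_irrotational {u v : ℝ × ℝ → ℝ} {p : ℝ × ℝ}
    (hu : ContDiffAt ℝ 2 u p) (hv : ContDiffAt ℝ 2 v p) (hrot : pdx v =ᶠ[𝓝 p] pdy u) :
    pdy (fun q => u q * pdx u q + v q * pdy u q) p
      = pdx (fun q => u q * pdx v q + v q * pdy v q) p := by
  have du := hu.differentiableAt two_ne_zero
  have dv := hv.differentiableAt two_ne_zero
  have dux := hu.differentiableAt_pdx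
  have duy := hu.differentiableAt_pdy
  have dvx := hv.differentiableAt_pdx
  have dvy := hv.differentiableAt_pdy
  have hxx : pdx (pdx v) p = pdy (pdx u) p := by rw [hrot.pdx_eq, pdx_pdy_comm hu]
  have hxy : pdx (pdy v) p = pdy (pdy u) p := by rw [pdx_pdy_comm hv, hrot.pdy_eq]
  rw [pdy_add (du.fun_mul dux) (dv.fun_mul duy), pdy_mul du dux, pdy_mul dv duy,
    pdx_add (du.fun_mul dvx) (dv.fun_mul dvy), pdx_mul du dvx, pdx_mul dv dvy, hxx, hxy,
    hrot.eq_of_nhds]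
  ring

theorem curl_of_convective_terms_vanishes
    (Ω : Set (ℝ × ℝ)) (hΩ : IsOpen Ω)
    (w₀ w₁ w₂ : ℝ × ℝ → ℝ)
    (hw₀ : ContDiffOn ℝ 3 w₀ Ω) (hw₁ : ContDiffOn ℝ 3 w₁ Ω) (hw₂ : ContDiffOn ℝ 3 w₂ Ω)
    (hφ0 : ∀ p ∈ Ω, lap w₂ p + 2 * pdx (pdy w₁) p = 0)
    (u v h₁ h₂ : ℝ × ℝ → ℝ)
    (hu : ∀ p, u p = pdx w₀ p + pdx w₁ p + pdy w₂ p)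
    (hv : ∀ p, v p = pdy w₀ p - pdy w₁ p - pdx w₂ p)
    (hh₁ : ∀ p, h₁ p = u p * pdx u p + v p * pdy u p)
    (hh₂ : ∀ p, h₂ p = u p * pdx v p + v p * pdy v p) :
    ∀ p ∈ Ω, pdy h₁ p = pdx h₂ p := by
  intro p hp
  have hC : ∀ {w : ℝ × ℝ → ℝ}, ContDiffOn ℝ 3 w Ω → ∀ q ∈ Ω, ContDiffAt ℝ 3 w q :=
    fun hw q hq => hw.contDiffAt (hΩ.mem_nhds hq)
  have hx : ∀ {w : ℝ × ℝ → ℝ}, ContDiffOn ℝ 3 w Ω → ContDiffAt ℝ 2 (pdx w) p :=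
    fun hw => (hC hw p hp).contDiffAt_pdx (by norm_num)
  have hy : ∀ {w : ℝ × ℝ → ℝ}, ContDiffOn ℝ 3 w Ω → ContDiffAt ℝ 2 (pdy w) p :=
    fun hw => (hC hw p hp).contDiffAt_pdy (by norm_num)
  obtain rfl : h₁ = _ := funext hh₁
  obtain rfl : h₂ = _ := funext hh₂
  obtain rfl : u = _ := funext hu
  obtain rfl : v = _ := funext hv
  apply pdy_convective_eq_pdx_convective_of_irrotational
  · exact ((hx hw₀).add (hx hw₁)).add (hy hw₂)
  · exact ((hy hw₀).sub (hy hw₁)).sub (hx hw₂)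
  · filter_upwards [hΩ.mem_nhds hp] with q hq
    have := pdx_sub_pdy_eq_neg_lap_add ((hC hw₀ q hq).of_le (by norm_num))
      ((hC hw₁ q hq).of_le (by norm_num)) ((hC hw₂ q hq).of_le (by norm_num))
    linarith [hφ0 q hq]
end

section
/- Let Ω ⊆ ℝ² be open, let ν ∈ ℝ, let f : Ω → ℝ be of class C², and let w₀, w₁, w₂ : Ω → ℝ be functions of class C⁴ on Ω satisfying ∇²w₂ + 2∂ₓᵧw₁ = 0 and ∇²w₀ + ∂ₓₓw₁ − ∂ᵧᵧw₁ = 0 on Ω. Define u = ∂ₓw₀ + ∂ₓw₁ + ∂ᵧw₂ and v = ∂ᵧw₀ − ∂ᵧw₁ − ∂ₓw₂. Then ∂ₓu + ∂ᵧv = 0 on Ω, and the curl compatibility condition ∂ᵧ(ν∇²u − u ∂ₓu − v ∂ᵧu + ∂ₓf) = ∂ₓ(ν∇²v − u ∂ₓv − v ∂ᵧv + ∂ᵧf) holds on Ω. -/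
/-!
By symmetry of second derivatives, `∂ₓu + ∂ᵧv = ∇²w₀ + ∂ₓₓw₁ - ∂ᵧᵧw₁` and
`∂ₓv - ∂ᵧu = -(∇²w₂ + 2∂ₓᵧw₁)`, so the two hypotheses say that `(u, v)` is divergence free and
curl free on `Ω`. Once `∂ₓv = ∂ᵧu` on the open set `Ω`, the same relation holds between all
derivatives of `v` and `u`, and the curl of `ν∇²(u, v) - (u, v)·∇(u, v) + ∇f` vanishes:
the viscous term inherits the zero curl, while `(u, v)·∇(u, v) = ∇((u² + v²) / 2)` and `∇f` are
gradients.
-/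

open Set

section DirDeriv

variable {E F : Type*} [NormedAddCommGroup E] [NormedSpace ℝ E]
  [NormedAddCommGroup F] [NormedSpace ℝ F] {m n : WithTop ℕ∞} {Ω : Set E} {p : E}

/-- Defined through `fderiv` (unlike `lineDeriv`) so that `pdx = dirDeriv (1, 0)` and
`pdy = dirDeriv (0, 1)` hold definitionally. -/
noncomputable def dirDeriv (a : E) (w : E → F) : E → F :=
  fun p => fderiv ℝ w p a

theorem contDiffAt_dirDeriv {w : E → F} (hw : ContDiffAt ℝ m w p) (hmn : n + 1 ≤ m) (a : E) :
    ContDiffAt ℝ n (dirDeriv a w) p :=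
  (hw.fderiv_right hmn).clm_apply contDiffAt_const

theorem contDiffOn_dirDeriv {w : E → F} (hw : ContDiffOn ℝ m w Ω) (hΩ : IsOpen Ω)
    (hmn : n + 1 ≤ m) (a : E) : ContDiffOn ℝ n (dirDeriv a w) Ω :=
  (hw.fderiv_of_isOpen hΩ hmn).clm_apply contDiffOn_const

theorem differentiableAt_dirDeriv {w : E → F} (hw : ContDiffAt ℝ 2 w p) (a : E) :
    DifferentiableAt ℝ (dirDeriv a w) p :=
  (contDiffAt_dirDeriv (n := 1) hw (by norm_num) a).differentiableAt one_ne_zero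

theorem differentiableAt_dirDeriv_dirDeriv {w : E → F} (hw : ContDiffAt ℝ 3 w p) (a b : E) :
    DifferentiableAt ℝ (dirDeriv a (dirDeriv b w)) p :=
  differentiableAt_dirDeriv (contDiffAt_dirDeriv hw (by norm_num) b) a

theorem dirDeriv_add {g h : E → F} (hg : DifferentiableAt ℝ g p) (hh : DifferentiableAt ℝ h p)
    (a : E) : dirDeriv a (fun q => g q + h q) p = dirDeriv a g p + dirDeriv a h p := by
  simp [dirDeriv, fderiv_fun_add hg hh]

theorem dirDeriv_sub {g h : E → F} (hg : DifferentiableAt ℝ g p) (hh : DifferentiableAt ℝ h p)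
    (a : E) : dirDeriv a (fun q => g q - h q) p = dirDeriv a g p - dirDeriv a h p := by
  simp [dirDeriv, fderiv_fun_sub hg hh]

theorem dirDeriv_const (c : F) (a : E) : dirDeriv a (fun _ => c) p = 0 := by
  simp [dirDeriv]

theorem dirDeriv_mul {g h : E → ℝ} (hg : DifferentiableAt ℝ g p) (hh : DifferentiableAt ℝ h p)
    (a : E) : dirDeriv a (fun q => g q * h q) p = dirDeriv a g p * h p + g p * dirDeriv a h p := by
  simp [dirDeriv, fderiv_fun_mul hg hh]
  ring

theorem Set.EqOn.eqOn_dirDeriv {g h : E → F} (hgh : EqOn g h Ω) (hΩ : IsOpen Ω) (a : E) :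
    EqOn (dirDeriv a g) (dirDeriv a h) Ω := fun q hq => by
  rw [dirDeriv, dirDeriv, (hgh.eventuallyEq_of_mem (hΩ.mem_nhds hq)).fderiv_eq]

theorem dirDeriv_comm {w : E → F} (hw : ContDiffAt ℝ 2 w p) (a b : E) :
    dirDeriv a (dirDeriv b w) p = dirDeriv b (dirDeriv a w) p := by
  have hd : DifferentiableAt ℝ (fderiv ℝ w) p :=
    (hw.fderiv_right (m := 1) (by norm_num)).differentiableAt one_ne_zero
  have hsnd : ∀ c d : E, dirDeriv c (dirDeriv d w) p = fderiv ℝ (fderiv ℝ w) p c d := fun c d => by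
    change fderiv ℝ (fun y => fderiv ℝ w y d) p c = _
    simp [fderiv_clm_apply hd (differentiableAt_const d)]
  rw [hsnd, hsnd, hw.isSymmSndFDerivAt (by simp)]

theorem Set.EqOn.eqOn_dirDeriv_dirDeriv {u v : E → F} {b c : E}
    (h : EqOn (dirDeriv b v) (dirDeriv c u) Ω) (hΩ : IsOpen Ω) (hu : ContDiffOn ℝ 2 u Ω)
    (hv : ContDiffOn ℝ 2 v Ω) (a : E) :
    EqOn (dirDeriv b (dirDeriv a v)) (dirDeriv c (dirDeriv a u)) Ω := fun q hq => by
  rw [dirDeriv_comm (hv.contDiffAt (hΩ.mem_nhds hq)), h.eqOn_dirDeriv hΩ a hq,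
    dirDeriv_comm (hu.contDiffAt (hΩ.mem_nhds hq))]

end DirDeriv

section Plane

theorem pdx_eq_dirDeriv : pdx = dirDeriv (1, 0) := rfl

theorem pdy_eq_dirDeriv : pdy = dirDeriv (0, 1) := rfl

variable {p : ℝ × ℝ}

theorem divergence_eq_of_potentials {w₀ w₁ w₂ : ℝ × ℝ → ℝ} (hw₀ : ContDiffAt ℝ 2 w₀ p)
    (hw₁ : ContDiffAt ℝ 2 w₁ p) (hw₂ : ContDiffAt ℝ 2 w₂ p) :
    pdx (fun q => pdx w₀ q + pdx w₁ q + pdy w₂ q) p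
        + pdy (fun q => pdy w₀ q - pdy w₁ q - pdx w₂ q) p
      = lap w₀ p + pdx (pdx w₁) p - pdy (pdy w₁) p := by
  have d₀ := differentiableAt_dirDeriv hw₀
  have d₁ := differentiableAt_dirDeriv hw₁
  have d₂ := differentiableAt_dirDeriv hw₂
  simp only [lap, pdx_eq_dirDeriv, pdy_eq_dirDeriv]
  simp (disch := fun_prop) only [dirDeriv_add, dirDeriv_sub]
  rw [dirDeriv_comm hw₂]
  ring

theorem curl_eq_of_potentials {w₀ w₁ w₂ : ℝ × ℝ → ℝ} (hw₀ : ContDiffAt ℝ 2 w₀ p)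
    (hw₁ : ContDiffAt ℝ 2 w₁ p) (hw₂ : ContDiffAt ℝ 2 w₂ p) :
    pdx (fun q => pdy w₀ q - pdy w₁ q - pdx w₂ q) p
        - pdy (fun q => pdx w₀ q + pdx w₁ q + pdy w₂ q) p
      = -(lap w₂ p + 2 * pdx (pdy w₁) p) := by
  have d₀ := differentiableAt_dirDeriv hw₀
  have d₁ := differentiableAt_dirDeriv hw₁
  have d₂ := differentiableAt_dirDeriv hw₂
  simp only [lap, pdx_eq_dirDeriv, pdy_eq_dirDeriv]
  simp (disch := fun_prop) only [dirDeriv_add, dirDeriv_sub]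
  rw [dirDeriv_comm hw₀, dirDeriv_comm hw₁]
  ring

theorem curl_compatibility_of_curl_free {Ω : Set (ℝ × ℝ)} (hΩ : IsOpen Ω) {u v f : ℝ × ℝ → ℝ}
    (hu : ContDiffOn ℝ 3 u Ω) (hv : ContDiffOn ℝ 3 v Ω) (hf : ContDiffOn ℝ 2 f Ω)
    (hcurl : EqOn (pdx v) (pdy u) Ω) (ν : ℝ) (hp : p ∈ Ω) :
    pdy (fun q => ν * lap u q - u q * pdx u q - v q * pdy u q + pdx f q) p =
      pdx (fun q => ν * lap v q - u q * pdx v q - v q * pdy v q + pdy f q) p := by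
  have hu₂ : ContDiffOn ℝ 2 u Ω := hu.of_le (by norm_num)
  have hv₂ : ContDiffOn ℝ 2 v Ω := hv.of_le (by norm_num)
  have hu₁ a : ContDiffOn ℝ 2 (dirDeriv a u) Ω := contDiffOn_dirDeriv hu hΩ (by norm_num) a
  have hv₁ a : ContDiffOn ℝ 2 (dirDeriv a v) Ω := contDiffOn_dirDeriv hv hΩ (by norm_num) a
  simp only [lap, pdx_eq_dirDeriv, pdy_eq_dirDeriv] at hcurl ⊢
  have hxx := hcurl.eqOn_dirDeriv_dirDeriv hΩ hu₂ hv₂ (1, 0)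
  have hxy := hcurl.eqOn_dirDeriv_dirDeriv hΩ hu₂ hv₂ (0, 1)
  have hxxx := hxx.eqOn_dirDeriv_dirDeriv hΩ (hu₁ _) (hv₁ _) (1, 0)
  have hxyy := hxy.eqOn_dirDeriv_dirDeriv hΩ (hu₁ _) (hv₁ _) (0, 1)
  have cu := hu.contDiffAt (hΩ.mem_nhds hp)
  have cv := hv.contDiffAt (hΩ.mem_nhds hp)
  have cf := hf.contDiffAt (hΩ.mem_nhds hp)
  have du := cu.differentiableAt (by norm_num)
  have dv := cv.differentiableAt (by norm_num)
  have du₁ := differentiableAt_dirDeriv (cu.of_le (by norm_num))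
  have dv₁ := differentiableAt_dirDeriv (cv.of_le (by norm_num))
  have du₂ := differentiableAt_dirDeriv_dirDeriv cu
  have dv₂ := differentiableAt_dirDeriv_dirDeriv cv
  have df₁ := differentiableAt_dirDeriv cf
  simp (disch := fun_prop) only [dirDeriv_add, dirDeriv_sub, dirDeriv_mul, dirDeriv_const]
  rw [hxxx hp, hxyy hp, hxx hp, hxy hp, hcurl hp, dirDeriv_comm cf]
  ring

end Plane

theorem incompressibility_and_curl_compatibility
    (Ω : Set (ℝ × ℝ)) (hΩ : IsOpen Ω) (ν : ℝ)
    (f : ℝ × ℝ → ℝ) (hf : ContDiffOn ℝ 2 f Ω)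
    (w₀ w₁ w₂ : ℝ × ℝ → ℝ)
    (hw₀ : ContDiffOn ℝ 4 w₀ Ω) (hw₁ : ContDiffOn ℝ 4 w₁ Ω) (hw₂ : ContDiffOn ℝ 4 w₂ Ω)
    (hφ0 : ∀ p ∈ Ω, lap w₂ p + 2 * pdx (pdy w₁) p = 0)
    (hw0eq : ∀ p ∈ Ω, lap w₀ p + pdx (pdx w₁) p - pdy (pdy w₁) p = 0)
    (u v : ℝ × ℝ → ℝ)
    (hu : ∀ p, u p = pdx w₀ p + pdx w₁ p + pdy w₂ p)
    (hv : ∀ p, v p = pdy w₀ p - pdy w₁ p - pdx w₂ p) :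
    (∀ p ∈ Ω, pdx u p + pdy v p = 0) ∧
    (∀ p ∈ Ω,
      pdy (fun q => ν * lap u q - u q * pdx u q - v q * pdy u q + pdx f q) p =
      pdx (fun q => ν * lap v q - u q * pdx v q - v q * pdy v q + pdy f q) p) := by
  obtain rfl : u = _ := funext hu
  obtain rfl : v = _ := funext hv
  have c₂ {w : ℝ × ℝ → ℝ} (hw : ContDiffOn ℝ 4 w Ω) {p} (hp : p ∈ Ω) : ContDiffAt ℝ 2 w p :=
    (hw.contDiffAt (hΩ.mem_nhds hp)).of_le (by norm_num)
  have c₃ {w : ℝ × ℝ → ℝ} (hw : ContDiffOn ℝ 4 w Ω) (a : ℝ × ℝ) :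
      ContDiffOn ℝ 3 (dirDeriv a w) Ω :=
    contDiffOn_dirDeriv hw hΩ (by norm_num) a
  refine ⟨fun p hp => ?_,
    fun p hp => curl_compatibility_of_curl_free hΩ ?_ ?_ hf (fun q hq => ?_) ν hp⟩
  · rw [divergence_eq_of_potentials (c₂ hw₀ hp) (c₂ hw₁ hp) (c₂ hw₂ hp)]
    exact hw0eq p hp
  · exact ((c₃ hw₀ _).add (c₃ hw₁ _)).add (c₃ hw₂ _)
  · exact ((c₃ hw₀ _).sub (c₃ hw₁ _)).sub (c₃ hw₂ _)
  · linarith [curl_eq_of_potentials (c₂ hw₀ hq) (c₂ hw₁ hq) (c₂ hw₂ hq), hφ0 q hq]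
end

section
/- Let r : ℝ → ℝ be a positive function of class C², let f₁(θ) = −r′(θ)/r(θ), f₀(θ) = 1 + f₁(θ)², f₂(θ) = 1 + f₁′(θ)/(1 + f₁(θ)²), f₃(θ) = 2f₁(θ)/(1 + f₁(θ)²), f₄(θ) = 1/(1 + f₁(θ)²), and let Φ : (0,∞) × ℝ → ℝ² be the map Φ(t,θ) = (t·r(θ)·cos θ, t·r(θ)·sin θ). Let u : ℝ² → ℝ be of class C² and set ũ = u ∘ Φ. Then for all (t,θ) with t > 0: (∇²u)(Φ(t,θ)) · r(θ)²/f₀(θ) = ∂ₜₜũ(t,θ) + (f₂(θ)/t)·∂ₜũ(t,θ) + (f₃(θ)/t)·∂_θ∂ₜũ(t,θ) + (f₄(θ)/t²)·∂_θθũ(t,θ). -/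
/-- The polar-type parametrization Φ(t,θ) = (t·r(θ)·cos θ, t·r(θ)·sin θ). -/
noncomputable def Phi (r : ℝ → ℝ) : ℝ × ℝ → ℝ × ℝ :=
  fun p => (p.1 * r p.2 * Real.cos p.2, p.1 * r p.2 * Real.sin p.2)

noncomputable def f1 (r : ℝ → ℝ) : ℝ → ℝ := fun θ => -deriv r θ / r θ

noncomputable def f0 (r : ℝ → ℝ) : ℝ → ℝ := fun θ => 1 + (f1 r θ) ^ 2

noncomputable def f2 (r : ℝ → ℝ) : ℝ → ℝ := fun θ => 1 + deriv (f1 r) θ / (1 + (f1 r θ) ^ 2)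

noncomputable def f3 (r : ℝ → ℝ) : ℝ → ℝ := fun θ => 2 * f1 r θ / (1 + (f1 r θ) ^ 2)

noncomputable def f4 (r : ℝ → ℝ) : ℝ → ℝ := fun θ => 1 / (1 + (f1 r θ) ^ 2)

/-!
Write `Φ(t, θ) = t • γ θ` with `γ θ = r θ • e θ`, where `e θ = (cos θ, sin θ)` and
`e⊥ θ = (-sin θ, cos θ)` form a rotating orthonormal frame (`e' = e⊥`, `e⊥' = -e`).
The chain rule gives `∂ₜũ = Du γ`, `∂ₜₜũ = D²u γ γ`, `∂_θ∂ₜũ = t D²u γ' γ + Du γ'` and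
`∂_θθũ = t² D²u γ' γ' + t Du γ''`, where `γ' = r' e + r e⊥` and
`γ'' = (r'' - r) e + 2 r' e⊥`. The Laplacian is the trace of `D²u`, hence equals
`D²u e e + D²u e⊥ e⊥`. With the symmetry of `D²u`, both sides of the identity become the same
rational expression in `r, r', r''` and the components of `Du` and `D²u` in the frame `(e, e⊥)`.
-/

open Real ContinuousLinearMap

theorem HasFDerivAt.pdx_eq {w : ℝ × ℝ → ℝ} {L : ℝ × ℝ →L[ℝ] ℝ} {p : ℝ × ℝ}
    (h : HasFDerivAt w L p) : pdx w p = L (1, 0) := by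
  rw [pdx, h.fderiv]

theorem HasFDerivAt.pdy_eq {w : ℝ × ℝ → ℝ} {L : ℝ × ℝ →L[ℝ] ℝ} {p : ℝ × ℝ}
    (h : HasFDerivAt w L p) : pdy w p = L (0, 1) := by
  rw [pdy, h.fderiv]

theorem lap_eq_fderiv_fderiv {u : ℝ × ℝ → ℝ} {q : ℝ × ℝ}
    (hu : DifferentiableAt ℝ (fderiv ℝ u) q) :
    lap u q =
      fderiv ℝ (fderiv ℝ u) q (1, 0) (1, 0) + fderiv ℝ (fderiv ℝ u) q (0, 1) (0, 1) := by
  change fderiv ℝ (fun p => fderiv ℝ u p (1, 0)) q (1, 0)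
    + fderiv ℝ (fun p => fderiv ℝ u p (0, 1)) q (0, 1) = _
  rw [fderiv_clm_apply hu (differentiableAt_const _),
    fderiv_clm_apply hu (differentiableAt_const _)]
  simp

theorem ContinuousLinearMap.apply_mk_eq {F : Type*} [NormedAddCommGroup F] [NormedSpace ℝ F]
    (L : ℝ × ℝ →L[ℝ] F) (a b : ℝ) : L (a, b) = a • L (1, 0) + b • L (0, 1) := by
  rw [← map_smul, ← map_smul, ← map_add]
  simp

section coneMap

variable {E : Type*} [NormedAddCommGroup E] [NormedSpace ℝ E] {u : E → ℝ} {γ : ℝ → E}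
  {p : ℝ × ℝ}

def coneMap (γ : ℝ → E) : ℝ × ℝ → E := fun p => p.1 • γ p.2

theorem hasFDerivAt_coneMap {γ' : E} (hγ : HasDerivAt γ γ' p.2) :
    HasFDerivAt (coneMap γ)
      ((fst ℝ ℝ ℝ).smulRight (γ p.2) + p.1 • (snd ℝ ℝ ℝ).smulRight γ') p :=
  (hasFDerivAt_fst.smul (hγ.hasFDerivAt.comp p hasFDerivAt_snd)).congr_fderiv <| by
    ext <;> simp [add_comm]

theorem pdx_comp_coneMap (hu : DifferentiableAt ℝ u (coneMap γ p))
    (hγ : DifferentiableAt ℝ γ p.2) :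
    pdx (u ∘ coneMap γ) p = fderiv ℝ u (coneMap γ p) (γ p.2) := by
  rw [(hu.hasFDerivAt.comp p (hasFDerivAt_coneMap hγ.hasDerivAt)).pdx_eq]
  simp

theorem pdy_comp_coneMap (hu : DifferentiableAt ℝ u (coneMap γ p))
    (hγ : DifferentiableAt ℝ γ p.2) :
    pdy (u ∘ coneMap γ) p = fderiv ℝ u (coneMap γ p) (coneMap (deriv γ) p) := by
  rw [(hu.hasFDerivAt.comp p (hasFDerivAt_coneMap hγ.hasDerivAt)).pdy_eq]
  simp [coneMap]

variable (hu : Differentiable ℝ u) (hu' : Differentiable ℝ (fderiv ℝ u))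
  (hγ : Differentiable ℝ γ)
include hu hu' hγ

theorem pdx_pdx_comp_coneMap :
    pdx (pdx (u ∘ coneMap γ)) p =
      fderiv ℝ (fderiv ℝ u) (coneMap γ p) (γ p.2) (γ p.2) := by
  rw [show pdx (u ∘ coneMap γ) = fun q => fderiv ℝ u (coneMap γ q) (γ q.2) from
      funext fun q => pdx_comp_coneMap (hu _) (hγ _)]
  refine (((hu' _).hasFDerivAt.comp p (hasFDerivAt_coneMap (hγ p.2).hasDerivAt)).clm_apply
    ((hγ p.2).hasFDerivAt.comp p hasFDerivAt_snd)).pdx_eq.trans ?_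
  simp

theorem pdy_pdx_comp_coneMap :
    pdy (pdx (u ∘ coneMap γ)) p =
      fderiv ℝ (fderiv ℝ u) (coneMap γ p) (p.1 • deriv γ p.2) (γ p.2)
        + fderiv ℝ u (coneMap γ p) (deriv γ p.2) := by
  rw [show pdx (u ∘ coneMap γ) = fun q => fderiv ℝ u (coneMap γ q) (γ q.2) from
      funext fun q => pdx_comp_coneMap (hu _) (hγ _)]
  refine (((hu' _).hasFDerivAt.comp p (hasFDerivAt_coneMap (hγ p.2).hasDerivAt)).clm_apply
    ((hγ p.2).hasFDerivAt.comp p hasFDerivAt_snd)).pdy_eq.trans ?_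
  simp [add_comm]

theorem pdy_pdy_comp_coneMap (hγ' : Differentiable ℝ (deriv γ)) :
    pdy (pdy (u ∘ coneMap γ)) p =
      fderiv ℝ (fderiv ℝ u) (coneMap γ p) (p.1 • deriv γ p.2) (p.1 • deriv γ p.2)
        + fderiv ℝ u (coneMap γ p) (p.1 • deriv (deriv γ) p.2) := by
  rw [show pdy (u ∘ coneMap γ) = fun q => fderiv ℝ u (coneMap γ q) (coneMap (deriv γ) q) from
      funext fun q => pdy_comp_coneMap (hu _) (hγ _)]
  refine (((hu' _).hasFDerivAt.comp p (hasFDerivAt_coneMap (hγ p.2).hasDerivAt)).clm_apply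
    (hasFDerivAt_coneMap (hγ' p.2).hasDerivAt)).pdy_eq.trans ?_
  simp [coneMap, add_comm]

end coneMap

noncomputable def radialUnit (θ : ℝ) : ℝ × ℝ := (cos θ, sin θ)

noncomputable def angularUnit (θ : ℝ) : ℝ × ℝ := (-sin θ, cos θ)

theorem apply_radialUnit_add_apply_angularUnit (H : ℝ × ℝ →L[ℝ] ℝ × ℝ →L[ℝ] ℝ)
    (θ : ℝ) :
    H (radialUnit θ) (radialUnit θ) + H (angularUnit θ) (angularUnit θ) =
      H (1, 0) (1, 0) + H (0, 1) (0, 1) := by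
  simp only [radialUnit, angularUnit, H.apply_mk_eq (cos θ), H.apply_mk_eq (-sin θ), add_apply,
    smul_apply, smul_eq_mul, apply_mk_eq _ (cos θ), apply_mk_eq _ (-sin θ)]
  linear_combination (H (1, 0) (1, 0) + H (0, 1) (0, 1)) * sin_sq_add_cos_sq θ

theorem hasDerivAt_radialUnit (θ : ℝ) : HasDerivAt radialUnit (angularUnit θ) θ :=
  (hasDerivAt_cos θ).prodMk (hasDerivAt_sin θ)

theorem hasDerivAt_angularUnit (θ : ℝ) : HasDerivAt angularUnit (-radialUnit θ) θ :=
  (hasDerivAt_sin θ).neg.prodMk (hasDerivAt_cos θ)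

theorem HasDerivAt.smul_radialUnit {r : ℝ → ℝ} {r' θ : ℝ} (hr : HasDerivAt r r' θ) :
    HasDerivAt (fun θ => r θ • radialUnit θ)
      (r' • radialUnit θ + r θ • angularUnit θ) θ :=
  (hr.smul (hasDerivAt_radialUnit θ)).congr_deriv (add_comm _ _)

theorem HasDerivAt.smul_angularUnit {r : ℝ → ℝ} {r' θ : ℝ} (hr : HasDerivAt r r' θ) :
    HasDerivAt (fun θ => r θ • angularUnit θ)
      (r' • angularUnit θ - r θ • radialUnit θ) θ :=
  (hr.smul (hasDerivAt_angularUnit θ)).congr_deriv (by rw [smul_neg, sub_eq_neg_add, add_comm])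

noncomputable def polarCurve (r : ℝ → ℝ) (θ : ℝ) : ℝ × ℝ := r θ • radialUnit θ

theorem Phi_eq_coneMap (r : ℝ → ℝ) : Phi r = coneMap (polarCurve r) := by
  ext p <;> simp [Phi, coneMap, polarCurve, radialUnit, mul_assoc]

section polarCurve

variable {r : ℝ → ℝ} (hr : Differentiable ℝ r)
include hr

theorem deriv_polarCurve :
    deriv (polarCurve r) = fun θ => deriv r θ • radialUnit θ + r θ • angularUnit θ :=
  funext fun θ => (hr θ).hasDerivAt.smul_radialUnit.deriv

theorem hasDerivAt_deriv_polarCurve {r'' θ : ℝ} (hr' : HasDerivAt (deriv r) r'' θ) :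
    HasDerivAt (deriv (polarCurve r))
      (r'' • radialUnit θ + deriv r θ • angularUnit θ
        + (deriv r θ • angularUnit θ - r θ • radialUnit θ)) θ := by
  rw [deriv_polarCurve hr]
  exact hr'.smul_radialUnit.fun_add (hr θ).hasDerivAt.smul_angularUnit

end polarCurve

theorem deriv_f1 {r : ℝ → ℝ} {θ : ℝ} (hr : DifferentiableAt ℝ r θ)
    (hr' : DifferentiableAt ℝ (deriv r) θ) (hr0 : r θ ≠ 0) :
    deriv (f1 r) θ = (deriv r θ ^ 2 - r θ * deriv (deriv r) θ) / r θ ^ 2 := by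
  have : HasDerivAt (f1 r) _ θ := hr'.hasDerivAt.neg.div hr.hasDerivAt hr0
  rw [this.deriv, Pi.neg_apply]
  ring

theorem laplacian_in_polar_coordinates
    (r : ℝ → ℝ) (hr_pos : ∀ θ, 0 < r θ) (hr : ContDiff ℝ 2 r)
    (u : ℝ × ℝ → ℝ) (hu : ContDiff ℝ 2 u) :
    ∀ t θ : ℝ, 0 < t →
      lap u (Phi r (t, θ)) * ((r θ) ^ 2 / f0 r θ) =
        pdx (pdx (u ∘ Phi r)) (t, θ)
        + (f2 r θ / t) * pdx (u ∘ Phi r) (t, θ)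
        + (f3 r θ / t) * pdy (pdx (u ∘ Phi r)) (t, θ)
        + (f4 r θ / t ^ 2) * pdy (pdy (u ∘ Phi r)) (t, θ) := by
  intro t θ _
  have hr₁ : Differentiable ℝ r := hr.differentiable (by norm_num)
  have hr₂ : Differentiable ℝ (deriv r) :=
    (contDiff_succ_iff_deriv.mp (hr : ContDiff ℝ (1 + 1) r)).2.2.differentiable one_ne_zero
  have hu₁ : Differentiable ℝ u := hu.differentiable (by norm_num)
  have hu₂ : Differentiable ℝ (fderiv ℝ u) :=
    (hu.fderiv_right (m := 1) (by norm_num)).differentiable one_ne_zero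
  have hγ : Differentiable ℝ (polarCurve r) := fun θ =>
    (hr₁ θ).hasDerivAt.smul_radialUnit.differentiableAt
  have hγ' : Differentiable ℝ (deriv (polarCurve r)) := fun θ =>
    (hasDerivAt_deriv_polarCurve hr₁ (hr₂ θ).hasDerivAt).differentiableAt
  have hsymm := (hu.contDiffAt (x := Phi r (t, θ))).isSymmSndFDerivAt (by simp)
  rw [Phi_eq_coneMap] at hsymm ⊢
  rw [lap_eq_fderiv_fderiv (hu₂ _), pdx_pdx_comp_coneMap hu₁ hu₂ hγ,
    pdy_pdx_comp_coneMap hu₁ hu₂ hγ, pdy_pdy_comp_coneMap hu₁ hu₂ hγ hγ',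
    pdx_comp_coneMap (hu₁ _) (hγ θ),
    (hasDerivAt_deriv_polarCurve hr₁ (hr₂ θ).hasDerivAt).deriv, deriv_polarCurve hr₁,
    ← apply_radialUnit_add_apply_angularUnit _ θ]
  simp only [polarCurve, map_add, map_sub, map_smul, add_apply, smul_apply, smul_eq_mul,
    hsymm (angularUnit θ) (radialUnit θ), f0, f2, f3, f4, f1,
    deriv_f1 (hr₁ θ) (hr₂ θ) (hr_pos θ).ne']
  have hr₀ := (hr_pos θ).ne'
  field_simp
  ring
end
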